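/- Let n ≥ 2, ρ = exp(2πi/n), s ∈ ℂ nonzero, Γ ∈ ℝ nonzero, and ω = (n−1)·Γ/(2·|s|²). Let z ∈ ℂ with z ≠ 0 and zⁿ ≠ sⁿ. If the point z co-rotates with the regular n-gon of vortices at s·ρᵏ with equal vorticities Γ, that is, if i·Γ·n·conj(z)^{n−1}/(conj(z)ⁿ − conj(s)ⁿ) = i·ω·z, then (z/s)ⁿ ∈ ℝ; equivalently the argument of z/s is an integer multiple of π/n. -/

import Mathlib

/-- **Co-rotating points with a regular polygon lie on rays of argument `Kπ/n`.**
If `z ≠ 0`, `zⁿ ≠ sⁿ`, and `z` co-rotates with the regular `n`-gon of vortices at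
`s ρᵏ` with equal vorticities `Γ` (angular velocity `ω = (n−1)Γ/(2|s|²)`), then
`(z/s)ⁿ` is real. -/
theorem corotating_point_one_polygon
    (n : ℕ) (hn : 2 ≤ n)
    (ρ : ℂ) (hρ : ρ = Complex.exp (2 * Real.pi * Complex.I / n))
    (s : ℂ) (hs : s ≠ 0)
    (Γ : ℝ) (hΓ : Γ ≠ 0)
    (ω : ℝ) (hω : ω = (n - 1) * Γ / (2 * ‖s‖ ^ 2))
    (z : ℂ) (hz0 : z ≠ 0) (hzn : z ^ n ≠ s ^ n)
    (hco : Complex.I * (Γ : ℂ) * n * (starRingEnd ℂ z) ^ (n - 1) /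
        ((starRingEnd ℂ z) ^ n - (starRingEnd ℂ s) ^ n)
      = Complex.I * (ω : ℂ) * z) :
    ((z / s) ^ n).im = 0 := by
  have hωR : ω ≠ 0 := by
    rw [hω]
    have h1 : (2:ℝ) ≤ (n:ℝ) := by exact_mod_cast hn
    have h2 : (0:ℝ) < ‖s‖ := norm_pos_iff.mpr hs
    have : (0:ℝ) < 2 * ‖s‖ ^ 2 := by positivity
    exact div_ne_zero (mul_ne_zero (by linarith) hΓ) (ne_of_gt this)
  have hden : (starRingEnd ℂ z) ^ n - (starRingEnd ℂ s) ^ n ≠ 0 := by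
    intro h
    apply hzn
    have h2 : starRingEnd ℂ (z ^ n) = starRingEnd ℂ (s ^ n) := by
      rw [map_pow, map_pow]; exact sub_eq_zero.mp h
    exact (starRingEnd ℂ).injective h2
  rw [div_eq_iff hden] at hco
  obtain ⟨m, rfl⟩ : ∃ m, n = m + 2 := ⟨n - 2, by omega⟩
  have hm1 : m + 2 - 1 = m + 1 := rfl
  rw [hm1] at hco
  -- multiply by z^(m+1) and cancel I
  have main : (Γ : ℂ) * (m + 2 : ℕ) * (z * starRingEnd ℂ z) ^ (m + 1)
      = (ω : ℂ) * ((z * starRingEnd ℂ z) ^ (m + 2) - z ^ (m + 2) * (starRingEnd ℂ s) ^ (m + 2)) := by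
    linear_combination (-Complex.I * z ^ (m + 1)) * hco +
      ((Γ : ℂ) * (m + 2 : ℕ) * (z * starRingEnd ℂ z) ^ (m + 1)
        - (ω : ℂ) * (z * starRingEnd ℂ z) ^ (m + 2)
        + (ω : ℂ) * z ^ (m + 2) * (starRingEnd ℂ s) ^ (m + 2)) * Complex.I_sq
  rw [Complex.mul_conj] at main
  have him : (z ^ (m + 2) * (starRingEnd ℂ s) ^ (m + 2)).im = 0 := by
    have := congrArg Complex.im main
    simp only [← Complex.ofReal_pow, ← Complex.ofReal_natCast, ← Complex.ofReal_mul,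
      Complex.mul_im, Complex.sub_im, Complex.sub_re, Complex.ofReal_im, Complex.ofReal_re,
      zero_mul, mul_zero, add_zero, zero_add, zero_sub, mul_neg, neg_eq_zero] at this
    rw [Complex.mul_im]
    rcases mul_eq_zero.mp (neg_eq_zero.mp this.symm) with h | h
    · exact absurd h hωR
    · exact h
  have hsn : (s : ℂ) ^ (m + 2) ≠ 0 := pow_ne_zero _ hs
  have hcs : starRingEnd ℂ (s ^ (m + 2)) ≠ 0 := by
    simpa using hsn
  have hrew : (z / s) ^ (m + 2)
      = (z ^ (m + 2) * (starRingEnd ℂ s) ^ (m + 2)) / ((Complex.normSq (s ^ (m + 2)) : ℝ) : ℂ) := by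
    rw [div_pow, ← Complex.mul_conj (s ^ (m + 2)), map_pow]
    rw [mul_div_mul_right _ _ (by simpa [map_pow] using hcs)]
  rw [hrew, Complex.div_ofReal_im, him, zero_div]
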